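/- Let P_x = (p_1,...,p_n) be n independent random points, each uniform on a disk of radius δ > 0, and let p ∈ (0,1]. With probability at least 1 − p, snapping all points of P_x onto the grid of width w = pδ/n³ (each point to its nearest grid point) yields a point set with the same order type as P_x, i.e., every triple of original points has the same orientation as the corresponding triple of snapped points. -/

import Mathlib

/-!
If snapping changed the orientation of a triple, then along the straight-line motion of the three
points to their snapped positions (each point moves by at most `√2 * w / 2`) the determinant would
vanish, giving a collinear triple within `√2 * w / 2` of the original one. Whichever original point
lies in the middle along that line is then within `√2 * w` of the line through the other two, so the
triple is `w`-flat.

For fixed `p_i, p_j`, the point `p_m` (`m ≠ i, j`) lies within `t` of the line through them with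
probability at most `4t / (πδ)`: that strip meets the disk inside a `2δ × 2t` rectangle. A union
bound over the `n · C(n, 2) ≤ n³ / 2` choices of `m` and `{i, j}` bounds the failure probability by
`2√2 p / π ≤ p`.
-/

open MeasureTheory Metric Real

noncomputable section

abbrev Pt := EuclideanSpace ℝ (Fin 2)

/-- Twice the signed area of the triangle `a b c`; its sign is the orientation. -/
def det3 (a b c : Pt) : ℝ :=
  (b 0 - a 0) * (c 1 - a 1) - (b 1 - a 1) * (c 0 - a 0)

/-- Orientation sign of an ordered triple of planar points. -/
def ori (a b c : Pt) : ℝ := Real.sign (det3 a b c)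

/-- The line through two points (as a subset of the plane). -/
def lineThrough (a b : Pt) : Set Pt := (affineSpan ℝ {a, b} : Set Pt)

/-- Distance from `x` to the line through `a` and `b`. -/
def distLine (x a b : Pt) : ℝ := Metric.infDist x (lineThrough a b)

/-- A triple is `w`-flat if some point is within distance `√2·w` of the
line through the other two. -/
def WFlat (w : ℝ) (p q r : Pt) : Prop :=
  distLine p q r ≤ Real.sqrt 2 * w ∨ distLine q p r ≤ Real.sqrt 2 * w ∨
    distLine r p q ≤ Real.sqrt 2 * w

/-- The uniform probability measure on the closed disk of radius `δ` centered at `c`. -/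
def unifDisk (c : Pt) (δ : ℝ) : Measure Pt :=
  (volume (Metric.closedBall c δ))⁻¹ • volume.restrict (Metric.closedBall c δ)

/-- Snapping a point to the nearest point of the grid `w·ℤ²`. -/
def snap (w : ℝ) (p : Pt) : Pt := WithLp.toLp 2 (fun i => w * (round (p i / w) : ℝ))

open Set

lemma dist_eq_abs_sub_of_apply_zero_eq {x y : Pt} (h : x 0 = y 0) : dist x y = |x 1 - y 1| := by
  simp [EuclideanSpace.dist_eq, Fin.sum_univ_two, h, Real.dist_eq, Real.sqrt_sq_eq_abs]

lemma abs_apply_sub_le_dist (x y : Pt) (i : Fin 2) : |x i - y i| ≤ dist x y := by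
  simpa [Real.dist_eq] using PiLp.dist_apply_le x y i

lemma dist_sq_eq_sq_add_sq (x y : Pt) : dist x y ^ 2 = (x 0 - y 0) ^ 2 + (x 1 - y 1) ^ 2 := by
  simp [EuclideanSpace.dist_eq, Fin.sum_univ_two, Real.dist_eq, sq_abs, add_nonneg, sq_nonneg]

lemma linearIsometryEquiv_lineMap_apply (ρ : Pt ≃ₗᵢ[ℝ] Pt) (p r : Pt) (τ : ℝ) (i : Fin 2) :
    ρ (AffineMap.lineMap p r τ) i = ρ p i + τ * (ρ r i - ρ p i) := by
  simp only [AffineMap.lineMap_apply, vsub_eq_sub, vadd_eq_add, map_add, map_smul, map_sub,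
    PiLp.add_apply, PiLp.smul_apply, PiLp.sub_apply, smul_eq_mul]
  ring

lemma lineThrough_comm (a b : Pt) : lineThrough a b = lineThrough b a := by
  rw [lineThrough, Set.pair_comm, ← lineThrough]

lemma distLine_comm (x a b : Pt) : distLine x a b = distLine x b a := by
  rw [distLine, lineThrough_comm, ← distLine]

lemma distLine_self (x a : Pt) : distLine x a a = dist x a := by
  simp [distLine, lineThrough]

lemma det3_lineMap (a b : Pt) (τ : ℝ) : det3 a b (AffineMap.lineMap a b τ) = 0 := by
  simp only [det3, AffineMap.lineMap_apply, vsub_eq_sub, vadd_eq_add, PiLp.add_apply,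
    PiLp.smul_apply, PiLp.sub_apply, smul_eq_mul, add_sub_cancel_right]
  ring

lemma det3_eq_zero_of_mem_lineThrough {a b y : Pt} (hy : y ∈ lineThrough a b) :
    det3 a b y = 0 := by
  obtain ⟨τ, rfl⟩ := mem_affineSpan_pair_iff_exists_lineMap_eq.1 hy
  exact det3_lineMap a b τ

lemma abs_det3_sub_det3_le (a b x y : Pt) :
    |det3 a b x - det3 a b y| ≤ dist a b * dist x y := by
  rw [← Real.sqrt_sq dist_nonneg, ← Real.sqrt_sq (dist_nonneg (x := x)),
    ← Real.sqrt_mul (sq_nonneg _), dist_sq_eq_sq_add_sq, dist_sq_eq_sq_add_sq]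
  apply Real.abs_le_sqrt
  simp only [det3]
  nlinarith [sq_nonneg ((b 0 - a 0) * (x 0 - y 0) + (b 1 - a 1) * (x 1 - y 1))]

lemma distLine_eq_of_ne {a b : Pt} (hab : a ≠ b) (x : Pt) :
    distLine x a b = |det3 a b x| / dist a b := by
  have hL : 0 < dist a b := dist_pos.2 hab
  apply le_antisymm
  · -- the foot of the perpendicular from `x`
    set τ := ((x 0 - a 0) * (b 0 - a 0) + (x 1 - a 1) * (b 1 - a 1)) / dist a b ^ 2
    refine (infDist_le_dist_of_mem (AffineMap.lineMap_mem_affineSpan_pair τ a b)).trans_eq ?_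
    rw [← Real.sqrt_sq dist_nonneg, ← Real.sqrt_sq (div_nonneg (abs_nonneg _) hL.le), div_pow,
      sq_abs, dist_sq_eq_sq_add_sq]
    congr 1
    have hL2 := dist_sq_eq_sq_add_sq a b
    simp only [AffineMap.lineMap_apply, τ, det3, vsub_eq_sub, vadd_eq_add, PiLp.add_apply,
      PiLp.smul_apply, PiLp.sub_apply, smul_eq_mul]
    field_simp
    rw [hL2]
    ring
  · refine (le_infDist ⟨a, left_mem_affineSpan_pair ℝ a b⟩).2 fun y hy => ?_
    rw [div_le_iff₀' hL]
    simpa [det3_eq_zero_of_mem_lineThrough hy] using abs_det3_sub_det3_le a b x y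

lemma measurable_distLine : Measurable fun z : Pt × Pt × Pt => distLine z.1 z.2.1 z.2.2 := by
  have h : (fun z : Pt × Pt × Pt => distLine z.1 z.2.1 z.2.2) = fun z =>
      if z.2.1 = z.2.2 then dist z.1 z.2.1 else |det3 z.2.1 z.2.2 z.1| / dist z.2.1 z.2.2 := by
    ext z
    split_ifs with hz
    · rw [hz, distLine_self]
    · exact distLine_eq_of_ne hz _
  rw [h]
  refine Measurable.ite (measurableSet_eq_fun (by fun_prop) (by fun_prop)) (by fun_prop) ?_
  simp only [det3]
  fun_prop

lemma collinear_of_det3_eq_zero {a b c : Pt} (h : det3 a b c = 0) : Collinear ℝ {a, b, c} := by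
  rcases eq_or_ne a b with rfl | hab
  · simp [collinear_pair]
  have hc : c ∈ lineThrough a b := by
    rw [lineThrough, (AffineSubspace.closed_of_finiteDimensional _).mem_iff_infDist_zero
      ⟨a, left_mem_affineSpan_pair ℝ a b⟩, ← lineThrough, ← distLine, distLine_eq_of_ne hab, h,
      abs_zero, zero_div]
  exact collinear_triple_of_mem_affineSpan_pair (left_mem_affineSpan_pair ℝ a b)
    (right_mem_affineSpan_pair ℝ a b) hc

lemma exists_linearIsometryEquiv_apply_one_eq_zero (v : Pt) :
    ∃ ρ : Pt ≃ₗᵢ[ℝ] Pt, ρ v 1 = 0 := by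
  set e : Pt := ‖v‖ • EuclideanSpace.single 0 1
  have he : ‖v‖ = ‖e‖ := by simp [e, norm_smul]
  exact ⟨(ℝ ∙ (v - e))ᗮ.reflection, by rw [Submodule.reflection_sub he]; simp [e]⟩

lemma Collinear.exists_linearIsometryEquiv_apply_one_eq {s : Set Pt} (hs : Collinear ℝ s) :
    ∃ (ρ : Pt ≃ₗᵢ[ℝ] Pt) (h : ℝ), ∀ p ∈ s, ρ p 1 = h := by
  obtain ⟨p₀, v, hv⟩ := (collinear_iff_exists_forall_eq_smul_vadd s).1 hs
  obtain ⟨ρ, hρ⟩ := exists_linearIsometryEquiv_apply_one_eq_zero v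
  refine ⟨ρ, ρ p₀ 1, fun p hp => ?_⟩
  obtain ⟨r, rfl⟩ := hv p hp
  simp [hρ]

lemma distLine_le_of_apply_zero_between (ρ : Pt ≃ₗᵢ[ℝ] Pt) {p q r : Pt} {h s : ℝ}
    (hp : |ρ p 1 - h| ≤ s) (hq : |ρ q 1 - h| ≤ s) (hr : |ρ r 1 - h| ≤ s)
    (hpq : ρ p 0 ≤ ρ q 0) (hqr : ρ q 0 ≤ ρ r 0) : distLine q p r ≤ 2 * s := by
  -- `y` is the point of the segment `[p, r]` with the same first `ρ`-coordinate as `q`; when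
  -- `ρ r 0 = ρ p 0` the division gives `τ = 0`, i.e. `y = p`, which still works.
  set τ := (ρ q 0 - ρ p 0) / (ρ r 0 - ρ p 0)
  set y := AffineMap.lineMap p r τ
  have hτ₀ : 0 ≤ τ := div_nonneg (by linarith) (by linarith)
  have hτ₁ : τ ≤ 1 := div_le_one_of_le₀ (by linarith) (by linarith)
  have hy₀ : ρ q 0 = ρ y 0 := by
    rw [linearIsometryEquiv_lineMap_apply]
    rcases eq_or_ne (ρ r 0) (ρ p 0) with hrp | hrp
    · rw [hrp, sub_self, mul_zero, add_zero]
      linarith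
    · rw [div_mul_cancel₀ _ (sub_ne_zero.2 hrp)]
      ring
  have hy₁ : |ρ y 1 - h| ≤ s := by
    rw [linearIsometryEquiv_lineMap_apply, abs_le] at *
    constructor <;> nlinarith
  calc distLine q p r ≤ dist q y :=
        infDist_le_dist_of_mem (AffineMap.lineMap_mem_affineSpan_pair _ _ _)
    _ = |ρ q 1 - ρ y 1| := by rw [← ρ.dist_map, dist_eq_abs_sub_of_apply_zero_eq hy₀]
    _ ≤ 2 * s := by rw [abs_le] at *; constructor <;> linarith

lemma wflat_of_collinear_of_dist_le {w : ℝ} {a b c a' b' c' : Pt} (h : Collinear ℝ {a', b', c'})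
    (ha : dist a a' ≤ √2 * w / 2) (hb : dist b b' ≤ √2 * w / 2) (hc : dist c c' ≤ √2 * w / 2) :
    WFlat w a b c := by
  -- Make the common line of `a', b', c'` horizontal: whichever of `a, b, c` is in the middle
  -- horizontally is within `2 · (√2 * w / 2)` of the line through the other two.
  obtain ⟨ρ, h, hρ⟩ := h.exists_linearIsometryEquiv_apply_one_eq
  have near : ∀ {x x'}, x' ∈ ({a', b', c'} : Set Pt) → dist x x' ≤ √2 * w / 2 →
      |ρ x 1 - h| ≤ √2 * w / 2 := fun hx' hd => by
    rw [← hρ _ hx', ← ρ.dist_map] at *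
    exact (abs_apply_sub_le_dist _ _ 1).trans hd
  have ha' := near (by simp) ha
  have hb' := near (by simp) hb
  have hc' := near (by simp) hc
  have h2 : 2 * (√2 * w / 2) = √2 * w := by ring
  rw [WFlat, ← h2]
  rcases le_total (ρ a 0) (ρ b 0) with hab | hab <;>
    rcases le_total (ρ b 0) (ρ c 0) with hbc | hbc <;>
    rcases le_total (ρ a 0) (ρ c 0) with hac | hac
  all_goals first
    | exact Or.inl (distLine_le_of_apply_zero_between ρ hb' ha' hc' ‹_› ‹_›)
    | exact Or.inl (distLine_comm a b c ▸ distLine_le_of_apply_zero_between ρ hc' ha' hb' ‹_› ‹_›)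
    | exact Or.inr (Or.inl (distLine_le_of_apply_zero_between ρ ha' hb' hc' ‹_› ‹_›))
    | exact Or.inr (Or.inl (distLine_comm b a c ▸
        distLine_le_of_apply_zero_between ρ hc' hb' ha' ‹_› ‹_›))
    | exact Or.inr (Or.inr (distLine_le_of_apply_zero_between ρ ha' hc' hb' ‹_› ‹_›))
    | exact Or.inr (Or.inr (distLine_comm c a b ▸
        distLine_le_of_apply_zero_between ρ hb' hc' ha' ‹_› ‹_›))

lemma Real.sign_eq_sign_of_forall_ne_zero {f : ℝ → ℝ} {a b : ℝ} (hf : ContinuousOn f (uIcc a b))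
    (h : ∀ t ∈ uIcc a b, f t ≠ 0) : Real.sign (f a) = Real.sign (f b) := by
  have ha := h a left_mem_uIcc
  have hb := h b right_mem_uIcc
  by_contra hne
  have h0 : (0 : ℝ) ∈ uIcc (f a) (f b) := by
    rcases ha.lt_or_gt with ha | ha <;> rcases hb.lt_or_gt with hb | hb <;>
      simp_all [Real.sign_of_neg, Real.sign_of_pos, mem_uIcc, le_of_lt]
  obtain ⟨t, ht, hft⟩ := intermediate_value_uIcc hf h0
  exact h t ht hft

lemma ori_eq_of_not_wflat {w : ℝ} {a b c a' b' c' : Pt} (hflat : ¬ WFlat w a b c)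
    (ha : dist a a' ≤ √2 * w / 2) (hb : dist b b' ≤ √2 * w / 2) (hc : dist c c' ≤ √2 * w / 2) :
    ori a b c = ori a' b' c' := by
  -- Along the straight-line motion from `a, b, c` to `a', b', c'` the determinant never vanishes.
  set D : ℝ → ℝ := fun t =>
    det3 (AffineMap.lineMap a a' t) (AffineMap.lineMap b b' t) (AffineMap.lineMap c c' t)
  have hD : ∀ t ∈ uIcc 0 1, D t ≠ 0 := by
    intro t ht hDt
    rw [uIcc_of_le zero_le_one] at ht
    have hmove : ∀ {x x' : Pt}, dist x x' ≤ √2 * w / 2 →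
        dist x (AffineMap.lineMap x x' t) ≤ √2 * w / 2 := fun hd => by
      rw [dist_left_lineMap, Real.norm_of_nonneg ht.1]
      exact (mul_le_of_le_one_left dist_nonneg ht.2).trans hd
    exact hflat (wflat_of_collinear_of_dist_le (collinear_of_det3_eq_zero hDt)
      (hmove ha) (hmove hb) (hmove hc))
  have hcont : Continuous D := by
    simp only [D, det3, AffineMap.lineMap_apply]
    fun_prop
  simpa [D, ori] using Real.sign_eq_sign_of_forall_ne_zero hcont.continuousOn hD

lemma dist_snap_le {w : ℝ} (hw : 0 < w) (x : Pt) : dist x (snap w x) ≤ √2 * w / 2 := by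
  have hcoord : ∀ i, |x i - snap w x i| ≤ w / 2 := fun i => by
    have h : x i - snap w x i = w * (x i / w - round (x i / w)) := by
      simp [snap]
      field_simp
    rw [h, abs_mul, abs_of_pos hw]
    linarith [mul_le_mul_of_nonneg_left (abs_sub_round (x i / w)) hw.le]
  rw [← Real.sqrt_sq (by positivity : 0 ≤ √2 * w / 2), ← Real.sqrt_sq dist_nonneg]
  refine Real.sqrt_le_sqrt ?_
  rw [dist_sq_eq_sq_add_sq, div_pow, mul_pow, Real.sq_sqrt zero_le_two]
  nlinarith [sq_le_sq' (abs_le.1 (hcoord 0)).1 (abs_le.1 (hcoord 0)).2,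
    sq_le_sq' (abs_le.1 (hcoord 1)).1 (abs_le.1 (hcoord 1)).2]

lemma ori_snap_eq_of_not_wflat {w : ℝ} (hw : 0 < w) {a b c : Pt} (h : ¬ WFlat w a b c) :
    ori (snap w a) (snap w b) (snap w c) = ori a b c :=
  (ori_eq_of_not_wflat h (dist_snap_le hw a) (dist_snap_le hw b) (dist_snap_le hw c)).symm

lemma EuclideanSpace.volume_setOf_forall_apply_mem {ι : Type*} [Fintype ι] (s : ι → Set ℝ) :
    volume {x : EuclideanSpace ℝ ι | ∀ i, x i ∈ s i} = ∏ i, volume (s i) := by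
  rw [← volume_pi_pi, ← (EuclideanSpace.volume_preserving_symm_measurableEquiv_toLp ι)
    |>.measure_preimage_equiv]
  congr 1
  ext x
  simp

lemma abs_apply_one_sub_le_distLine (ρ : Pt ≃ₗᵢ[ℝ] Pt) {a b : Pt} (hab : ρ a 1 = ρ b 1)
    (x : Pt) : |ρ x 1 - ρ a 1| ≤ distLine x a b := by
  refine (le_infDist ⟨a, left_mem_affineSpan_pair ℝ a b⟩).2 fun y hy => ?_
  obtain ⟨τ, rfl⟩ := mem_affineSpan_pair_iff_exists_lineMap_eq.1 hy
  calc |ρ x 1 - ρ a 1| = |ρ x 1 - ρ (AffineMap.lineMap a b τ) 1| := by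
        rw [linearIsometryEquiv_lineMap_apply, hab, sub_self, mul_zero, add_zero]
    _ ≤ dist (ρ x) (ρ (AffineMap.lineMap a b τ)) := abs_apply_sub_le_dist _ _ 1
    _ = dist x (AffineMap.lineMap a b τ) := ρ.dist_map _ _

lemma volume_closedBall_inter_setOf_distLine_le (c a b : Pt) (δ t : ℝ) :
    volume (closedBall c δ ∩ {x | distLine x a b ≤ t})
      ≤ ENNReal.ofReal (2 * δ) * ENNReal.ofReal (2 * t) := by
  obtain ⟨ρ, hρ⟩ := exists_linearIsometryEquiv_apply_one_eq_zero (b - a)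
  have hab : ρ a 1 = ρ b 1 := by
    rw [map_sub, PiLp.sub_apply, sub_eq_zero] at hρ
    exact hρ.symm
  have hsub : closedBall c δ ∩ {x | distLine x a b ≤ t} ⊆
      ρ ⁻¹' {y | ∀ i, y i ∈ ![closedBall (ρ c 0) δ, closedBall (ρ a 1) t] i} := by
    rintro x ⟨hxc, hxt⟩ i
    fin_cases i
    · rw [mem_closedBall, ← ρ.dist_map] at hxc
      simpa [Real.dist_eq] using (abs_apply_sub_le_dist _ _ 0).trans hxc
    · simpa [Real.dist_eq] using (abs_apply_one_sub_le_distLine ρ hab x).trans hxt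
  calc _ ≤ volume (ρ ⁻¹' {y | ∀ i, y i ∈ ![closedBall (ρ c 0) δ, closedBall (ρ a 1) t] i}) :=
        measure_mono hsub
    _ = ENNReal.ofReal (2 * δ) * ENNReal.ofReal (2 * t) := by
        rw [← ρ.coe_toMeasurableEquiv, MeasurePreserving.measure_preimage_equiv ρ.measurePreserving,
          EuclideanSpace.volume_setOf_forall_apply_mem, Fin.prod_univ_two]
        simp [Real.volume_closedBall]

lemma isProbabilityMeasure_unifDisk (c : Pt) {δ : ℝ} (hδ : 0 < δ) :
    IsProbabilityMeasure (unifDisk c δ) :=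
  ProbabilityTheory.cond_isProbabilityMeasure_of_finite (measure_closedBall_pos volume c hδ).ne'
    measure_closedBall_lt_top.ne

lemma unifDisk_setOf_distLine_le (c a b : Pt) {δ : ℝ} (hδ : 0 < δ) (t : ℝ) :
    unifDisk c δ {x | distLine x a b ≤ t} ≤ ENNReal.ofReal (4 * t / (π * δ)) := by
  rw [unifDisk, ← ProbabilityTheory.cond, ProbabilityTheory.cond_apply measurableSet_closedBall,
    EuclideanSpace.volume_closedBall_fin_two]
  calc _ ≤ (ENNReal.ofReal δ ^ 2 * ENNReal.ofReal π)⁻¹ *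
        (ENNReal.ofReal (2 * δ) * ENNReal.ofReal (2 * t)) := by
        gcongr
        exact volume_closedBall_inter_setOf_distLine_le c a b δ t
    _ = ENNReal.ofReal (4 * t / (π * δ)) := by
        rw [← ENNReal.ofReal_pow hδ.le, ← ENNReal.ofReal_mul (by positivity),
          ← ENNReal.ofReal_inv_of_pos (by positivity), ← ENNReal.ofReal_mul (by positivity),
          ← ENNReal.ofReal_mul (by positivity)]
        congr 1
        field_simp
        ring

lemma MeasureTheory.Measure.pi_le_of_forall_update_le {ι : Type*} [Fintype ι] [DecidableEq ι]
    {X : ι → Type*} [∀ i, MeasurableSpace (X i)] (μ : ∀ i, Measure (X i))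
    [∀ i, IsProbabilityMeasure (μ i)] {S : Set (∀ i, X i)} (hS : MeasurableSet S) (m : ι)
    {q : ENNReal} (hq : ∀ f, μ m {x | Function.update f m x ∈ S} ≤ q) :
    Measure.pi μ S ≤ q := by
  have f₀ : ∀ i, X i := fun i => (nonempty_of_isProbabilityMeasure (μ i)).some
  rw [← lintegral_indicator_one hS, lintegral_eq_lmarginal_univ f₀,
    lmarginal_erase' _ (measurable_one.indicator hS) (Finset.mem_univ m)]
  calc _ ≤ (∫⋯∫⁻_Finset.univ.erase m, (fun _ => q) ∂μ) f₀ := by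
        refine lmarginal_mono (fun f => ?_) f₀
        exact (lintegral_indicator_one (hS.preimage (measurable_update f))).trans_le (hq f)
    _ = q := by simp [lmarginal]

lemma measure_pi_setOf_distLine_le {ι : Type*} [Fintype ι] [DecidableEq ι] (c : ι → Pt)
    {δ : ℝ} (hδ : 0 < δ) (t : ℝ) {m i j : ι} (hi : i ≠ m) (hj : j ≠ m) :
    Measure.pi (fun l => unifDisk (c l) δ) {f | distLine (f m) (f i) (f j) ≤ t}
      ≤ ENNReal.ofReal (4 * t / (π * δ)) := by
  have := fun l => isProbabilityMeasure_unifDisk (c l) hδ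
  refine Measure.pi_le_of_forall_update_le _ ?_ m fun f => ?_
  · exact measurableSet_le (measurable_distLine.comp (f := fun f : ι → Pt => (f m, f i, f j))
      (by fun_prop)) measurable_const
  · simpa [Function.update_of_ne hi, Function.update_of_ne hj]
      using unifDisk_setOf_distLine_le (c m) (f i) (f j) hδ t

lemma exists_distLine_le_of_ori_snap_ne {ι : Type*} [LinearOrder ι] {w : ℝ} (hw : 0 < w)
    {f : ι → Pt} {i j k : ι}
    (h : ori (snap w (f i)) (snap w (f j)) (snap w (f k)) ≠ ori (f i) (f j) (f k)) :
    ∃ m a b, a < b ∧ a ≠ m ∧ b ≠ m ∧ distLine (f m) (f a) (f b) ≤ √2 * w := by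
  have hij : i ≠ j := by rintro rfl; simp [ori, det3] at h
  have hik : i ≠ k := by rintro rfl; simp [ori, det3, mul_comm] at h
  have hjk : j ≠ k := by rintro rfl; simp [ori, det3, mul_comm] at h
  have pick : ∀ {m a b}, a ≠ m → b ≠ m → a ≠ b → distLine (f m) (f a) (f b) ≤ √2 * w →
      ∃ m a b, a < b ∧ a ≠ m ∧ b ≠ m ∧ distLine (f m) (f a) (f b) ≤ √2 * w := by
    intro m a b ham hbm hab hd
    rcases hab.lt_or_gt with hab | hab
    · exact ⟨m, a, b, hab, ham, hbm, hd⟩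
    · exact ⟨m, b, a, hab, hbm, ham, distLine_comm (f m) _ _ ▸ hd⟩
  have hflat : WFlat w (f i) (f j) (f k) := not_not.1 (mt (ori_snap_eq_of_not_wflat hw) h)
  rcases hflat with hd | hd | hd
  · exact pick hij.symm hik.symm hjk hd
  · exact pick hij hjk.symm hik hd
  · exact pick hik hjk hij hd

lemma card_filter_lt_and_ne_le (ι : Type*) [Fintype ι] [LinearOrder ι] :
    (Finset.univ.filter fun x : ι × ι × ι => x.2.1 < x.2.2 ∧ x.2.1 ≠ x.1 ∧ x.2.2 ≠ x.1).card
      ≤ Fintype.card ι * (Fintype.card ι).choose 2 := by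
  rw [← Fintype.card_product_filter_lt, ← Finset.card_univ, ← Finset.card_product]
  refine Finset.card_le_card fun x hx => ?_
  simp only [Finset.mem_filter, Finset.mem_univ, true_and] at hx
  simp [hx.1]

lemma measure_pi_compl_setOf_ori_snap_eq_le {ι : Type*} [Fintype ι] [LinearOrder ι]
    (c : ι → Pt) {δ w : ℝ} (hδ : 0 < δ) (hw : 0 < w) :
    Measure.pi (fun i => unifDisk (c i) δ)
        {f : ι → Pt | ∀ i j k : ι,
          ori (snap w (f i)) (snap w (f j)) (snap w (f k)) = ori (f i) (f j) (f k)}ᶜ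
      ≤ ENNReal.ofReal (Fintype.card ι * (Fintype.card ι).choose 2 * (4 * (√2 * w) / (π * δ))) := by
  set T := Finset.univ.filter fun x : ι × ι × ι => x.2.1 < x.2.2 ∧ x.2.1 ≠ x.1 ∧ x.2.2 ≠ x.1
  have hbad : {f : ι → Pt | ∀ i j k : ι,
      ori (snap w (f i)) (snap w (f j)) (snap w (f k)) = ori (f i) (f j) (f k)}ᶜ ⊆
      ⋃ x ∈ T, {f | distLine (f x.1) (f x.2.1) (f x.2.2) ≤ √2 * w} := by
    intro f hf
    simp only [mem_compl_iff, mem_ofPred_eq, not_forall] at hf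
    obtain ⟨i, j, k, h⟩ := hf
    obtain ⟨m, a, b, hab, ham, hbm, hd⟩ := exists_distLine_le_of_ori_snap_ne hw h
    exact mem_biUnion (x := (m, a, b)) (by simp [T, hab, ham, hbm]) hd
  calc _ ≤ ∑ x ∈ T, Measure.pi (fun i => unifDisk (c i) δ)
          {f | distLine (f x.1) (f x.2.1) (f x.2.2) ≤ √2 * w} :=
        (measure_mono hbad).trans (measure_biUnion_finset_le _ _)
    _ ≤ T.card • ENNReal.ofReal (4 * (√2 * w) / (π * δ)) := by
        classical
        refine Finset.sum_le_card_nsmul _ _ _ fun x hx => ?_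
        obtain ⟨-, -, hx₁, hx₂⟩ := Finset.mem_filter.1 hx
        exact measure_pi_setOf_distLine_le c hδ _ hx₁ hx₂
    _ ≤ _ := by
        rw [nsmul_eq_mul, ← ENNReal.ofReal_natCast, ← ENNReal.ofReal_mul (Nat.cast_nonneg _)]
        refine ENNReal.ofReal_le_ofReal (mul_le_mul_of_nonneg_right ?_ (by positivity))
        exact_mod_cast card_filter_lt_and_ne_le ι

lemma two_mul_sqrt_two_le_pi : 2 * √2 ≤ π := by
  nlinarith [Real.sq_sqrt (zero_le_two : (0 : ℝ) ≤ 2), Real.sqrt_nonneg 2, Real.pi_gt_three]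

lemma cast_mul_choose_two_le (n : ℕ) : (n * n.choose 2 : ℝ) ≤ n ^ 3 / 2 := by
  rw [Nat.cast_choose_two]
  nlinarith [sq_nonneg (n : ℝ)]

lemma cast_mul_choose_two_mul_le {n : ℕ} (hn : 1 ≤ n) {δ p : ℝ} (hδ : 0 < δ) (hp : 0 ≤ p) :
    (n * n.choose 2 : ℝ) * (4 * (√2 * (p * δ / n ^ 3)) / (π * δ)) ≤ p := by
  have hn' : (n : ℝ) ≠ 0 := by positivity
  calc (n * n.choose 2 : ℝ) * (4 * (√2 * (p * δ / n ^ 3)) / (π * δ))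
      ≤ n ^ 3 / 2 * (4 * (√2 * (p * δ / n ^ 3)) / (π * δ)) := by
        gcongr
        exact cast_mul_choose_two_le n
    _ = 2 * √2 / π * p := by
        field_simp
        ring
    _ ≤ p := mul_le_of_le_one_left hp (div_le_one_of_le₀ two_mul_sqrt_two_le_pi pi_pos.le)

theorem stmt8_general (n : ℕ) (hn : 1 ≤ n) (δ p : ℝ) (hδ : 0 < δ) (hp : 0 < p)
    (c : Fin n → Pt) :
    ENNReal.ofReal (1 - p) ≤
      Measure.pi (fun i => unifDisk (c i) δ)
        {f : Fin n → Pt | ∀ i j k : Fin n,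
          ori (snap (p * δ / (n : ℝ) ^ 3) (f i)) (snap (p * δ / (n : ℝ) ^ 3) (f j))
              (snap (p * δ / (n : ℝ) ^ 3) (f k)) = ori (f i) (f j) (f k)} := by
  have := fun i => isProbabilityMeasure_unifDisk (c i) hδ
  set G := {f : Fin n → Pt | ∀ i j k : Fin n,
    ori (snap (p * δ / (n : ℝ) ^ 3) (f i)) (snap (p * δ / (n : ℝ) ^ 3) (f j))
      (snap (p * δ / (n : ℝ) ^ 3) (f k)) = ori (f i) (f j) (f k)}
  have hbad : Measure.pi (fun i => unifDisk (c i) δ) Gᶜ ≤ ENNReal.ofReal p := by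
    refine (measure_pi_compl_setOf_ori_snap_eq_le c hδ (by positivity)).trans ?_
    rw [Fintype.card_fin]
    exact ENNReal.ofReal_le_ofReal (cast_mul_choose_two_mul_le hn hδ hp.le)
  calc ENNReal.ofReal (1 - p) = 1 - ENNReal.ofReal p := by
        rw [ENNReal.ofReal_sub _ hp.le, ENNReal.ofReal_one]
    _ ≤ 1 - Measure.pi (fun i => unifDisk (c i) δ) Gᶜ := tsub_le_tsub_left hbad 1
    _ ≤ Measure.pi (fun i => unifDisk (c i) δ) G := by
        rw [tsub_le_iff_right, ← measure_univ (μ := Measure.pi fun i => unifDisk (c i) δ)]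
        exact measure_univ_le_add_compl G

theorem stmt8 (n : ℕ) (hn : 1 ≤ n) (δ p : ℝ) (hδ : 0 < δ) (hp : 0 < p) (hp1 : p ≤ 1)
    (c : Fin n → Pt) :
    ENNReal.ofReal (1 - p) ≤
      Measure.pi (fun i => unifDisk (c i) δ)
        {f : Fin n → Pt | ∀ i j k : Fin n,
          ori (snap (p * δ / (n : ℝ) ^ 3) (f i)) (snap (p * δ / (n : ℝ) ^ 3) (f j))
              (snap (p * δ / (n : ℝ) ^ 3) (f k)) = ori (f i) (f j) (f k)} :=
  stmt8_general n hn δ p hδ hp c
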